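/- Let Φ ∈ ℝ^{n×d} be full column rank with largest singular value σ_max, y ∈ ℝ^n, and run gradient descent w_{t+1} = w_t − η Φᵀ(Φw_t − y) with w₀ = 0 and 0 < η < 1/σ_max². Define Alignment(Φ, y, τ) = Σ_{i: σᵢ ≥ τ} (uᵢᵀy)². If Alignment(Φ, y, τ) = δ for some 0 < τ ≤ σ_max and 0 ≤ ω < δ, then for any t ≥ −log(1 − ω/δ)/(2ητ²), the loss reduction satisfies ‖Φw₀ − y‖² − ‖Φw_t − y‖² ≥ ω. -/

import Mathlib

/-!
In the left singular basis gradient descent decouples: the coordinates of `Uᵀ (Φ w_t - y)` are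
multiplied by `1 - η σᵢ²` at each step, starting from `-Uᵀ y`. As `Uᵀ` preserves the squared norm,
the loss reduction is `∑ᵢ (1 - (1 - η σᵢ²)^(2t)) (uᵢᵀ y)²`, a sum of nonnegative terms because
`η σ_max² < 1`. For `σᵢ ≥ τ` the factor is at most `1 - η τ² ≤ exp (-η τ²)`, so the reduction is
at least `(1 - exp (-2 η τ² t)) δ`, which is `≥ ω` past the stated number of steps.
-/

open Matrix Finset

namespace Matrix

variable {m k R : Type*} [Fintype m] [Fintype k]

theorem sum_sq_transpose_mulVec [CommSemiring R] [DecidableEq m] {U : Matrix m m R}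
    (hU : U * Uᵀ = 1) (x : m → R) : ∑ i, (Uᵀ *ᵥ x) i ^ 2 = ∑ i, x i ^ 2 := by
  have h : Uᵀ *ᵥ x ⬝ᵥ Uᵀ *ᵥ x = x ⬝ᵥ x := by
    rw [dotProduct_mulVec, vecMul_transpose, mulVec_mulVec, hU, one_mulVec]
  simpa only [dotProduct, sq] using h

theorem transpose_mul_mul_transpose_eq_of_svd [CommSemiring R] [DecidableEq m] [DecidableEq k]
    {Φ S : Matrix m k R} {U : Matrix m m R} {V : Matrix k k R}
    (hU : Uᵀ * U = 1) (hV : Vᵀ * V = 1) (hΦ : Φ = U * S * Vᵀ) :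
    Uᵀ * (Φ * Φᵀ) = S * Sᵀ * Uᵀ := by
  simp only [hΦ, transpose_mul, transpose_transpose, Matrix.mul_assoc]
  rw [← Matrix.mul_assoc Uᵀ, hU, Matrix.one_mul, ← Matrix.mul_assoc Vᵀ, hV, Matrix.one_mul]

def rectDiagonal {n d : ℕ} [Zero R] (σ : Fin d → R) : Matrix (Fin n) (Fin d) R :=
  of fun i j => if (i : ℕ) = j then σ j else 0

theorem rectDiagonal_mul_transpose {n d : ℕ} [Semiring R] (σ : Fin d → R) :
    rectDiagonal (n := n) σ * (rectDiagonal σ)ᵀ =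
      diagonal fun i : Fin n => if h : (i : ℕ) < d then σ ⟨i, h⟩ ^ 2 else 0 := by
  ext i i'
  by_cases hi : (i : ℕ) < d
  · rw [mul_apply, Fintype.sum_eq_single ⟨i, hi⟩]
    · by_cases hii : i = i'
      · subst hii; simp [rectDiagonal, sq, hi]
      · have : (i' : ℕ) ≠ i := fun h => hii (Fin.ext h.symm)
        simp [rectDiagonal, hii, this]
    · intro j hj
      have : (i : ℕ) ≠ j := fun h => hj (Fin.ext h.symm)
      simp [rectDiagonal, this]
  · have : ∀ j : Fin d, (i : ℕ) ≠ j := fun j h => hi (h ▸ j.2)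
    simp [mul_apply, rectDiagonal, diagonal_apply, hi, this]

end Matrix

section GradientDescent

variable {m k R : Type*} [Fintype m] [Fintype k] [CommRing R]
  (Φ : Matrix m k R) (y : m → R) (η : R) {w : ℕ → k → R}

theorem gd_residual_succ (hw : ∀ t, w (t + 1) = w t - η • Φᵀ *ᵥ (Φ *ᵥ w t - y)) (t : ℕ) :
    Φ *ᵥ w (t + 1) - y = (Φ *ᵥ w t - y) - η • (Φ * Φᵀ) *ᵥ (Φ *ᵥ w t - y) := by
  rw [hw, mulVec_sub, mulVec_smul, mulVec_mulVec, sub_sub, add_comm, ← sub_sub]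

variable [DecidableEq m] {U : Matrix m m R} {s : m → R}

theorem transpose_mulVec_gd_residual
    (hdiag : Uᵀ * (Φ * Φᵀ) = diagonal s * Uᵀ)
    (hw : ∀ t, w (t + 1) = w t - η • Φᵀ *ᵥ (Φ *ᵥ w t - y)) (t : ℕ) (i : m) :
    (Uᵀ *ᵥ (Φ *ᵥ w t - y)) i = (1 - η * s i) ^ t * (Uᵀ *ᵥ (Φ *ᵥ w 0 - y)) i := by
  induction t with
  | zero => rw [pow_zero, one_mul]
  | succ t ih =>
    rw [gd_residual_succ Φ y η hw, mulVec_sub, mulVec_smul, mulVec_mulVec, hdiag,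
      ← mulVec_mulVec, Pi.sub_apply, Pi.smul_apply, mulVec_diagonal, smul_eq_mul, ih, pow_succ]
    ring

theorem gd_loss_sub_loss (hU : U * Uᵀ = 1)
    (hdiag : Uᵀ * (Φ * Φᵀ) = diagonal s * Uᵀ) (hw0 : w 0 = 0)
    (hw : ∀ t, w (t + 1) = w t - η • Φᵀ *ᵥ (Φ *ᵥ w t - y)) (t : ℕ) :
    ∑ i, (Φ *ᵥ w 0 - y) i ^ 2 - ∑ i, (Φ *ᵥ w t - y) i ^ 2 =
      ∑ i, (1 - (1 - η * s i) ^ (2 * t)) * (Uᵀ *ᵥ y) i ^ 2 := by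
  rw [← sum_sq_transpose_mulVec hU, ← sum_sq_transpose_mulVec hU (Φ *ᵥ w t - y),
    ← sum_sub_distrib]
  refine sum_congr rfl fun i _ => ?_
  rw [transpose_mulVec_gd_residual Φ y η hdiag hw t, hw0, mulVec_zero, zero_sub, mulVec_neg]
  simp only [Pi.neg_apply]
  ring

end GradientDescent

theorem one_sub_pow_mul_sum_le {ι : Type*} [Fintype ι] {c q : ι → ℝ} {b : ℝ} (S : Finset ι)
    (hc₀ : ∀ i, 0 ≤ c i) (hc₁ : ∀ i, c i ≤ 1) (hq : ∀ i, 0 ≤ q i) (hcb : ∀ i ∈ S, c i ≤ b)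
    (N : ℕ) : (1 - b ^ N) * ∑ i ∈ S, q i ≤ ∑ i, (1 - c i ^ N) * q i := by
  rw [mul_sum]
  calc ∑ i ∈ S, (1 - b ^ N) * q i ≤ ∑ i ∈ S, (1 - c i ^ N) * q i := by
        gcongr with i hi
        exacts [hq i, hc₀ i, hcb i hi]
    _ ≤ ∑ i, (1 - c i ^ N) * q i :=
        sum_le_sum_of_subset_of_nonneg (subset_univ S) fun i _ _ =>
          mul_nonneg (sub_nonneg.2 (pow_le_one₀ (hc₀ i) (hc₁ i))) (hq i)

theorem le_one_sub_exp_mul_of_neg_log_div_le {a δ ω t : ℝ} (ha : 0 < a) (hω : 0 ≤ ω)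
    (hωδ : ω < δ) (ht : -Real.log (1 - ω / δ) / a ≤ t) :
    ω ≤ (1 - Real.exp (-(a * t))) * δ := by
  have hδ : 0 < δ := hω.trans_lt hωδ
  have hpos : 0 < 1 - ω / δ := by rw [sub_pos, div_lt_one hδ]; exact hωδ
  have hexp : Real.exp (-(a * t)) ≤ 1 - ω / δ := by
    rw [← Real.exp_log hpos, Real.exp_le_exp]
    rw [div_le_iff₀ ha] at ht
    linarith
  have := mul_le_mul_of_nonneg_right hexp hδ.le
  rw [sub_mul, div_mul_cancel₀ _ hδ.ne'] at this
  linarith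

theorem mul_sq_lt_one_of_isGreatest {ι : Type*} {σ : ι → ℝ} {σmax η : ℝ}
    (hσpos : ∀ i, 0 < σ i) (hσmax : IsGreatest (Set.range σ) σmax) (hη0 : 0 < η)
    (hη : η < 1 / σmax ^ 2) (i : ι) : η * σ i ^ 2 < 1 := by
  obtain ⟨⟨k, rfl⟩, hmax⟩ := hσmax
  rw [lt_div_iff₀ (pow_pos (hσpos k) 2)] at hη
  calc η * σ i ^ 2 ≤ η * σ k ^ 2 := by gcongr; exacts [(hσpos i).le, hmax ⟨i, rfl⟩]
    _ < 1 := hη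

theorem gd_alignment_loss_reduction_general
    (n d : ℕ) (hdn : d ≤ n)
    (Φ : Matrix (Fin n) (Fin d) ℝ)
    (U : Matrix (Fin n) (Fin n) ℝ) (V : Matrix (Fin d) (Fin d) ℝ)
    (σ : Fin d → ℝ)
    (hU1 : Uᵀ * U = 1) (hU2 : U * Uᵀ = 1)
    (hV1 : Vᵀ * V = 1)
    (hΦ : Φ = U * (Matrix.of fun (i : Fin n) (j : Fin d) =>
        if (i : ℕ) = (j : ℕ) then σ j else 0) * Vᵀ)
    (hσpos : ∀ i : Fin d, 0 < σ i)
    (σmax : ℝ) (hσmax : IsGreatest (Set.range σ) σmax)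
    (η : ℝ) (hη0 : 0 < η) (hη : η < 1 / σmax ^ 2)
    (y : Fin n → ℝ)
    (w : ℕ → Fin d → ℝ) (hw0 : w 0 = 0)
    (hw : ∀ t, w (t + 1) = w t - η • (Φᵀ.mulVec (Φ.mulVec (w t) - y)))
    (τ δ ω : ℝ) (hτ0 : 0 < τ)
    (hδ : (∑ i ∈ Finset.univ.filter (fun i : Fin d => τ ≤ σ i),
        ((Uᵀ.mulVec y) (Fin.castLE hdn i)) ^ 2) = δ)
    (hω0 : 0 ≤ ω) (hωδ : ω < δ) :
    ∀ t : ℕ, (t : ℝ) ≥ -Real.log (1 - ω / δ) / (2 * η * τ ^ 2) →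
      (∑ i, (Φ.mulVec (w 0) - y) i ^ 2) - ∑ i, (Φ.mulVec (w t) - y) i ^ 2 ≥ ω := by
  intro t ht
  set s : Fin n → ℝ := fun i => if h : (i : ℕ) < d then σ ⟨i, h⟩ ^ 2 else 0 with hs
  have hdiag : Uᵀ * (Φ * Φᵀ) = diagonal s * Uᵀ := by
    rw [transpose_mul_mul_transpose_eq_of_svd (S := rectDiagonal σ) hU1 hV1 hΦ,
      rectDiagonal_mul_transpose]
  have hc : ∀ i, 0 ≤ 1 - η * s i ∧ 1 - η * s i ≤ 1 := fun i => by
    simp only [hs]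
    split_ifs with h
    · have := mul_sq_lt_one_of_isGreatest hσpos hσmax hη0 hη ⟨i, h⟩
      constructor <;> nlinarith [sq_nonneg (σ ⟨i, h⟩)]
    · simp
  have hgood : ∀ j, τ ≤ σ j → 1 - η * s (Fin.castLE hdn j) ≤ Real.exp (-(η * τ ^ 2)) := by
    intro j hj
    have : η * τ ^ 2 ≤ η * σ j ^ 2 := by gcongr
    simp only [hs, Fin.val_castLE, j.2, dite_true]
    linarith [Real.add_one_le_exp (-(η * τ ^ 2))]
  rw [ge_iff_le, gd_loss_sub_loss Φ y η hU2 hdiag hw0 hw]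
  calc ω ≤ (1 - Real.exp (-(2 * η * τ ^ 2 * t))) * δ :=
        le_one_sub_exp_mul_of_neg_log_div_le (by positivity) hω0 hωδ ht
    _ = (1 - Real.exp (-(η * τ ^ 2)) ^ (2 * t)) *
          ∑ i ∈ (univ.filter fun i : Fin d => τ ≤ σ i).map (Fin.castLEEmb hdn),
            (Uᵀ *ᵥ y) i ^ 2 := by
        rw [sum_map, ← Real.exp_nat_mul, ← hδ]
        push_cast
        ring_nf
    _ ≤ _ := one_sub_pow_mul_sum_le _ (fun i => (hc i).1) (fun i => (hc i).2)
        (fun i => sq_nonneg _) (by simpa using hgood) _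

/-- If `Alignment(Φ,y,τ) = δ` then after `t ≥ −log(1−ω/δ)/(2ητ²)` iterations
gradient descent has reduced the loss by at least `ω`. -/
theorem gd_alignment_loss_reduction
    (n d : ℕ) (hdn : d ≤ n)
    (Φ : Matrix (Fin n) (Fin d) ℝ)
    (U : Matrix (Fin n) (Fin n) ℝ) (V : Matrix (Fin d) (Fin d) ℝ)
    (σ : Fin d → ℝ)
    (hU1 : Uᵀ * U = 1) (hU2 : U * Uᵀ = 1)
    (hV1 : Vᵀ * V = 1) (hV2 : V * Vᵀ = 1)
    (hΦ : Φ = U * (Matrix.of fun (i : Fin n) (j : Fin d) =>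
        if (i : ℕ) = (j : ℕ) then σ j else 0) * Vᵀ)
    (hdesc : ∀ i j : Fin d, i ≤ j → σ j ≤ σ i)
    (hσpos : ∀ i : Fin d, 0 < σ i)
    (σmax : ℝ) (hσmax : IsGreatest (Set.range σ) σmax)
    (η : ℝ) (hη0 : 0 < η) (hη : η < 1 / σmax ^ 2)
    (y : Fin n → ℝ)
    (w : ℕ → Fin d → ℝ) (hw0 : w 0 = 0)
    (hw : ∀ t, w (t + 1) = w t - η • (Φᵀ.mulVec (Φ.mulVec (w t) - y)))
    (τ δ ω : ℝ) (hτ0 : 0 < τ) (hτmax : τ ≤ σmax)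
    (hδ : (∑ i ∈ Finset.univ.filter (fun i : Fin d => τ ≤ σ i),
        ((Uᵀ.mulVec y) (Fin.castLE hdn i)) ^ 2) = δ)
    (hω0 : 0 ≤ ω) (hωδ : ω < δ) :
    ∀ t : ℕ, (t : ℝ) ≥ -Real.log (1 - ω / δ) / (2 * η * τ ^ 2) →
      (∑ i, (Φ.mulVec (w 0) - y) i ^ 2) - ∑ i, (Φ.mulVec (w t) - y) i ^ 2 ≥ ω :=
  gd_alignment_loss_reduction_general n d hdn Φ U V σ hU1 hU2 hV1 hΦ hσpos σmax hσmax η hη0 hη y w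
    hw0 hw τ δ ω hτ0 hδ hω0 hωδ
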